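/- arXiv:2010.05241 — 2 statements merged into one kernel-verified Lean document; each statement's English description precedes it below -/
import Mathlib

section
/- Let x be a random vector in ℝⁿ satisfying the Gaussian concentration property: ℙ[g(x) ≥ 𝔼[g(x)] + r] ≤ exp(−γr²/2) for every 1-Lipschitz g and r ≥ 0. Let μ = 𝔼[‖x‖] and α ∈ (0,1]. Then 𝔼[exp(−(γα²/2)‖x‖²)] ≤ 2·exp(−(γα²/(2(1+α)²))·μ²). -/
open MeasureTheory Real

/-!
Put `t = 𝔼‖X‖ / (1 + α)`. Where `‖X‖ > t` the integrand is at most `exp (-γ (α t)² / 2)`,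
and the event `‖X‖ ≤ t = 𝔼‖X‖ - α t` is a lower deviation of the `1`-Lipschitz function `‖·‖`
by `α t`, so it has probability at most the same quantity. The integrand is at most `1`
everywhere, and `γ (α t)² / 2` is exactly the exponent `γ α² 𝔼‖X‖² / (2 (1 + α)²)`.
-/

section Concentration

variable {Ω E : Type*} [MeasurableSpace Ω] [PseudoMetricSpace E]

def HasGaussianConcentration (μ : Measure Ω) (X : Ω → E) (γ : ℝ) : Prop :=
  ∀ g : E → ℝ, LipschitzWith 1 g → ∀ r : ℝ, 0 ≤ r →
    μ {ω | (∫ ω', g (X ω') ∂μ) + r ≤ g (X ω)} ≤ ENNReal.ofReal (Real.exp (-γ * r ^ 2 / 2))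

theorem HasGaussianConcentration.measure_le_integral_sub_le {μ : Measure Ω} {X : Ω → E} {γ : ℝ}
    (hX : HasGaussianConcentration μ X γ) {g : E → ℝ} (hg : LipschitzWith 1 g) {r : ℝ}
    (hr : 0 ≤ r) :
    μ {ω | g (X ω) ≤ (∫ ω', g (X ω') ∂μ) - r} ≤ ENNReal.ofReal (Real.exp (-γ * r ^ 2 / 2)) := by
  convert hX (fun x ↦ -g x) hg.neg r hr using 2
  ext ω
  simp only [Set.mem_ofPred_eq, integral_neg]
  constructor <;> intro h <;> linarith

end Concentration

/-- No measurability is needed: a non-integrable `f` has integral `0`, and `sᶜ` can be replaced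
by its measurable hull. -/
theorem integral_le_two_mul_of_le_on_of_measure_compl_le {Ω : Type*} [MeasurableSpace Ω]
    {μ : Measure Ω} [IsProbabilityMeasure μ] {f : Ω → ℝ} {s : Set Ω} {c : ℝ} (hc : 0 ≤ c)
    (hf_le_one : ∀ ω, f ω ≤ 1) (hf_le_on : ∀ ω ∈ s, f ω ≤ c)
    (hs : μ sᶜ ≤ ENNReal.ofReal c) :
    ∫ ω, f ω ∂μ ≤ 2 * c := by
  by_cases hf : Integrable f μ
  swap
  · rw [integral_undef hf]
    positivity
  set u := toMeasurable μ sᶜ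
  have hu : MeasurableSet u := measurableSet_toMeasurable μ sᶜ
  have hf_le : ∀ ω, f ω ≤ c + u.indicator 1 ω := by
    intro ω
    by_cases hω : ω ∈ s
    · have : 0 ≤ u.indicator (1 : Ω → ℝ) ω := Set.indicator_nonneg (fun _ _ ↦ zero_le_one) ω
      linarith [hf_le_on ω hω]
    · rw [Set.indicator_of_mem (subset_toMeasurable μ sᶜ hω), Pi.one_apply]
      linarith [hf_le_one ω]
  have hu_le : μ.real u ≤ c := by
    rw [measureReal_def, measure_toMeasurable]
    exact ENNReal.toReal_le_of_le_ofReal hc hs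
  have hind : Integrable (u.indicator (1 : Ω → ℝ)) μ := (integrable_const 1).indicator hu
  calc ∫ ω, f ω ∂μ ≤ ∫ ω, (c + u.indicator 1 ω) ∂μ :=
        integral_mono hf ((integrable_const c).add hind) hf_le
    _ = c + μ.real u := by
        rw [integral_add (integrable_const c) hind, integral_indicator_one hu, integral_const,
          probReal_univ, one_smul]
    _ ≤ 2 * c := by linarith

theorem stmt_5_general {Ω : Type*} [MeasurableSpace Ω] (μ : Measure Ω) [IsProbabilityMeasure μ]
    (n : ℕ) (γ α : ℝ) (hγ : 0 < γ) (hα0 : 0 < α)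
    (X : Ω → EuclideanSpace ℝ (Fin n))
    (hconc : ∀ g : EuclideanSpace ℝ (Fin n) → ℝ, LipschitzWith 1 g → ∀ r : ℝ, 0 ≤ r →
      μ {ω | (∫ ω', g (X ω') ∂μ) + r ≤ g (X ω)} ≤ ENNReal.ofReal (Real.exp (-γ * r^2 / 2))) :
    ∫ ω, Real.exp (-(γ * α^2 / 2) * ‖X ω‖^2) ∂μ ≤
      2 * Real.exp (-(γ * α^2 / (2*(1+α)^2)) * (∫ ω, ‖X ω‖ ∂μ)^2) := by
  set M := ∫ ω, ‖X ω‖ ∂μ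
  set t := M / (1 + α)
  have ht : 0 ≤ t := div_nonneg (integral_nonneg fun ω ↦ norm_nonneg _) (by linarith)
  have hMt : M - α * t = t := by
    simp only [t]
    field_simp
    ring
  have hexponent : -(γ * α^2 / (2*(1+α)^2)) * M^2 = -γ * (α * t)^2 / 2 := by
    simp only [t]
    field_simp
  have hlower := HasGaussianConcentration.measure_le_integral_sub_le hconc lipschitzWith_one_norm
    (mul_nonneg hα0.le ht)
  rw [hMt] at hlower
  rw [hexponent]
  refine integral_le_two_mul_of_le_on_of_measure_compl_le (s := {ω | t < ‖X ω‖})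
    (exp_pos _).le (fun ω ↦ exp_le_one_iff.2 ?_) (fun ω hω ↦ exp_le_exp.2 ?_) ?_
  · have : 0 ≤ γ * α^2 / 2 * ‖X ω‖^2 := by positivity
    linarith
  · have hsq : t^2 ≤ ‖X ω‖^2 := pow_le_pow_left₀ ht (le_of_lt hω) 2
    have := mul_le_mul_of_nonneg_left hsq (by positivity : 0 ≤ γ * α ^ 2 / 2)
    linarith
  · simpa only [Set.compl_ofPred, not_lt] using hlower

theorem stmt_5 {Ω : Type*} [MeasurableSpace Ω] (μ : Measure Ω) [IsProbabilityMeasure μ]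
    (n : ℕ) (γ α : ℝ) (hγ : 0 < γ) (hα0 : 0 < α) (hα1 : α ≤ 1)
    (X : Ω → EuclideanSpace ℝ (Fin n)) (hXm : Measurable X)
    (hconc : ∀ g : EuclideanSpace ℝ (Fin n) → ℝ, LipschitzWith 1 g → ∀ r : ℝ, 0 ≤ r →
      μ {ω | (∫ ω', g (X ω') ∂μ) + r ≤ g (X ω)} ≤ ENNReal.ofReal (Real.exp (-γ * r^2 / 2))) :
    ∫ ω, Real.exp (-(γ * α^2 / 2) * ‖X ω‖^2) ∂μ ≤
      2 * Real.exp (-(γ * α^2 / (2*(1+α)^2)) * (∫ ω, ‖X ω‖ ∂μ)^2) :=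
  stmt_5_general μ n γ α hγ hα0 X hconc
end

section
/- For every a > 0 and b ∈ (0,1), Γ(a+b) ≤ a^b · Γ(a); equivalently, B(a,b) ≥ Γ(b)·a^{−b} where B is the Beta function. -/
open MeasureTheory ProbabilityTheory Real
open scoped RealInnerProductSpace ENNReal NNReal

/-- Wendel's inequality. Writing `a + b = (1 - b) a + b (a + 1)`, it is log-convexity of `Γ`
between `a` and `a + 1`, combined with `Γ (a + 1) = a Γ a`. -/
theorem Real.Gamma_add_le_rpow_mul_Gamma {a b : ℝ} (ha : 0 < a) (hb0 : 0 < b) (hb1 : b < 1) :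
    Gamma (a + b) ≤ a ^ b * Gamma a := by
  have hGa : 0 < Gamma a := Gamma_pos_of_pos ha
  calc Gamma (a + b) = Gamma ((1 - b) * a + b * (a + 1)) := by ring_nf
    _ ≤ Gamma a ^ (1 - b) * Gamma (a + 1) ^ b :=
        Gamma_mul_add_mul_le_rpow_Gamma_mul_rpow_Gamma ha (by linarith) (by linarith) hb0
          (by ring)
    _ = a ^ b * Gamma a := by
        rw [Gamma_add_one ha.ne', mul_rpow ha.le hGa.le, mul_left_comm, ← rpow_add hGa]
        norm_num

theorem Real.Gamma_mul_rpow_neg_le_beta {a b : ℝ} (ha : 0 < a) (hb0 : 0 < b) (hb1 : b < 1) :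
    Gamma b * a ^ (-b) ≤ Gamma a * Gamma b / Gamma (a + b) := by
  have hGa : 0 < Gamma a := Gamma_pos_of_pos ha
  calc Gamma b * a ^ (-b) = Gamma a * Gamma b / (a ^ b * Gamma a) := by
        rw [rpow_neg ha.le]
        field_simp
    _ ≤ Gamma a * Gamma b / Gamma (a + b) :=
        div_le_div_of_nonneg_left (by positivity [Gamma_pos_of_pos hb0])
          (Gamma_pos_of_pos (by linarith)) (Gamma_add_le_rpow_mul_Gamma ha hb0 hb1)

theorem stmt_11 (a b : ℝ) (ha : 0 < a) (hb0 : 0 < b) (hb1 : b < 1) :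
    Real.Gamma (a+b) ≤ a ^ b * Real.Gamma a ∧
    Real.Gamma a * Real.Gamma b / Real.Gamma (a+b) ≥ Real.Gamma b * a ^ (-b) :=
  ⟨Gamma_add_le_rpow_mul_Gamma ha hb0 hb1, Gamma_mul_rpow_neg_le_beta ha hb0 hb1⟩
end
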